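/- The bicharacter r satisfies r(y₁², g⁻²y₁²) = 2N²·t⁻⁴, and consequently r(g⁻²y₁², g⁻²y₁²) = 2N²·t⁻⁴. (In the paper's notation: r((λ₀(1))² ⊗ e^{−2λ₀}(λ₀(1))²) = 2N²(x−y)⁻⁴ and r(e^{−2λ₀}(λ₀(1))² ⊗ e^{−2λ₀}(λ₀(1))²) = 2N²(x−y)⁻⁴.) -/

import Mathlib

open TensorProduct

noncomputable section

/-- `Rb` is the commutative `ℂ`-algebra `ℂ[g,g⁻¹] ⊗ ℂ[y₁,y₂,…]`, realized as Laurent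
polynomials in one variable with coefficients in a polynomial ring in countably many
variables.  It is the underlying algebra of Borcherds's rank-one lattice bialgebra `V^L`. -/
abbrev Rb : Type := LaurentPolynomial (MvPolynomial ℕ ℂ)

/-- `Lt` is the Laurent polynomial ring `ℂ[t,t⁻¹]`. -/
abbrev Lt : Type := LaurentPolynomial ℂ

/-- `gp n` is the element `gⁿ` of `Rb`. -/
def gp (n : ℤ) : Rb := LaurentPolynomial.T n

/-- `yv k` is the variable `y_k` of `Rb` (only `k ≥ 1` is used). -/
def yv (k : ℕ) : Rb := LaurentPolynomial.C (MvPolynomial.X k)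

/-- `tp n` is the element `tⁿ` of `ℂ[t,t⁻¹]`. -/
def tp (n : ℤ) : Lt := LaurentPolynomial.T n

/-!
Everything comes down to pairing `y₁ = D g` with group-likes. By (B3) and (B1),
`r(y₁, gⁿ) = nN·t^{nN-1}`; as `N` is even this exponent is odd, so the twist (B2) gives
`r(gⁿ, y₁) = -nN·t^{nN-1}`, and (B3) once more gives `r(y₁, y₁)`. From `Δ y₁ = y₁ ⊗ g + g ⊗ y₁`
the element `x = g⁻¹y₁` is primitive, and (B4) yields `r(g⁻¹y₁, y₁) = N·t⁻²`, hence also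
`r(y₁, x) = N·t⁻²`. Since `r(y₁, 1) = 0`, (B4) applied to the primitive `x` reduces
`r(y₁², x²)` to the cross term `2·r(y₁, x)²`; and since `g⁻²y₁² = x²`, `r(g⁻², 1) = 1` and
`r(y₁², 1) = r(y₁², x) = 0`, the second value equals the first.
-/

namespace LaurentPolynomial

theorem algHom_T_eq_negOnePow_smul {R : Type*} [CommRing R] (ι : R[T;T⁻¹] →ₐ[R] R[T;T⁻¹])
    (h : ι (T 1) = -T 1) (n : ℤ) : ι (T n) = n.negOnePow • T n := by
  have h_inv : (T 1 * T (-1) : R[T;T⁻¹]) = 1 := by rw [← T_add, add_neg_cancel, T_zero]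
  have h_neg_one : ι (T (-1)) = -T (-1) := by
    have h_inv' := congrArg ι h_inv
    rw [map_mul, map_one, h] at h_inv'
    linear_combination (-T (-1)) * h_inv' - ι (T (-1)) * h_inv
  induction n using Int.induction_on with
  | zero => simp
  | succ i ih =>
    rw [T_add, map_mul, ih, h, Int.negOnePow_succ, Units.neg_smul, smul_mul_assoc, mul_neg,
      smul_neg]
  | pred i ih =>
    rw [T_sub, map_mul, ih, h_neg_one, Int.negOnePow_sub, Int.negOnePow_one, mul_neg_one,
      Units.neg_smul, smul_mul_assoc, mul_neg, smul_neg]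

end LaurentPolynomial

section Bicharacter

variable {k A B : Type*} [CommSemiring k] [CommSemiring A] [Algebra k A]
  [CommSemiring B] [Algebra k B] {Δ : A →ₐ[k] A ⊗[k] A} {r : A →ₗ[k] A →ₗ[k] B}

theorem map_derivation_apply_of_grouplike (D : Derivation k A A)
    (hΔD : ∀ v : A, Δ (D v) =
      (TensorProduct.map D.toLinearMap LinearMap.id + TensorProduct.map LinearMap.id D.toLinearMap
        : A ⊗[k] A →ₗ[k] A ⊗[k] A) (Δ v))
    {g : A} (hg : Δ g = g ⊗ₜ g) : Δ (D g) = D g ⊗ₜ g + g ⊗ₜ D g := by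
  rw [hΔD, hg, LinearMap.add_apply, map_tmul, map_tmul]
  rfl

theorem map_mul_of_grouplike_of_skew_primitive {h g x : A} (hh : Δ h = h ⊗ₜ h)
    (hx : Δ x = x ⊗ₜ g + g ⊗ₜ x) (hhg : h * g = 1) :
    Δ (h * x) = (h * x) ⊗ₜ 1 + 1 ⊗ₜ (h * x) := by
  rw [map_mul, hh, hx, mul_add, Algebra.TensorProduct.tmul_mul_tmul,
    Algebra.TensorProduct.tmul_mul_tmul, hhg]

theorem lift_mul_compl₁₂_tmul (f g : A →ₗ[k] B) (a b : A) :
    TensorProduct.lift ((LinearMap.mul k B).compl₁₂ f g) (a ⊗ₜ b) = f a * g b := rfl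

theorem bicharacter_mul_one (hB4 : ∀ v₁ v₂ w : A, r (v₁ * v₂) w =
      TensorProduct.lift ((LinearMap.mul k B).compl₁₂ (r v₁) (r v₂)) (Δ w)) (v₁ v₂ : A) :
    r (v₁ * v₂) 1 = r v₁ 1 * r v₂ 1 := by
  rw [hB4, map_one, Algebra.TensorProduct.one_def, lift_mul_compl₁₂_tmul]

theorem bicharacter_mul_primitive (hB4 : ∀ v₁ v₂ w : A, r (v₁ * v₂) w =
      TensorProduct.lift ((LinearMap.mul k B).compl₁₂ (r v₁) (r v₂)) (Δ w))
    {x : A} (hx : Δ x = x ⊗ₜ 1 + 1 ⊗ₜ x) (v₁ v₂ : A) :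
    r (v₁ * v₂) x = r v₁ x * r v₂ 1 + r v₁ 1 * r v₂ x := by
  rw [hB4, hx, map_add, lift_mul_compl₁₂_tmul, lift_mul_compl₁₂_tmul]

theorem bicharacter_mul_sq_primitive (hB4 : ∀ v₁ v₂ w : A, r (v₁ * v₂) w =
      TensorProduct.lift ((LinearMap.mul k B).compl₁₂ (r v₁) (r v₂)) (Δ w))
    {x : A} (hx : Δ x = x ⊗ₜ 1 + 1 ⊗ₜ x) (v₁ v₂ : A) :
    r (v₁ * v₂) (x ^ 2) =
      r v₁ (x ^ 2) * r v₂ 1 + 2 * (r v₁ x * r v₂ x) + r v₁ 1 * r v₂ (x ^ 2) := by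
  have hx2 : Δ (x ^ 2) = (x ^ 2) ⊗ₜ 1 + (x ⊗ₜ x + x ⊗ₜ x) + 1 ⊗ₜ (x ^ 2) := by
    rw [map_pow, hx, add_sq, two_mul, add_mul, Algebra.TensorProduct.tmul_pow,
      Algebra.TensorProduct.tmul_pow, Algebra.TensorProduct.tmul_mul_tmul, one_mul, mul_one,
      one_pow]
  rw [hB4, hx2]
  simp only [map_add, lift_mul_compl₁₂_tmul, two_mul]

end Bicharacter

theorem gp_zero : gp 0 = 1 := LaurentPolynomial.T_zero

theorem gp_add (m n : ℤ) : gp (m + n) = gp m * gp n := LaurentPolynomial.T_add m n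

theorem tp_zero : tp 0 = 1 := LaurentPolynomial.T_zero

theorem tp_add (m n : ℤ) : tp (m + n) = tp m * tp n := LaurentPolynomial.T_add m n

theorem smul_tp_mul_smul_tp (a b : ℂ) (m n : ℤ) :
    a • tp m * b • tp n = (a * b) • tp (m + n) := by
  rw [smul_mul_smul_comm, tp_add]

theorem gp_neg_one_mul_yv_one_sq : (gp (-1) * yv 1) ^ 2 = gp (-2) * yv 1 ^ 2 := by
  rw [mul_pow, sq (gp (-1)), ← gp_add]
  norm_num

section Borcherds

variable {N : ℕ} {D : Derivation ℂ Rb Rb} {Δ : Rb →ₐ[ℂ] Rb ⊗[ℂ] Rb} {d : Derivation ℂ Lt Lt}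
  {ι : Lt ≃ₐ[ℂ] Lt} {r : Rb →ₗ[ℂ] Rb →ₗ[ℂ] Lt}

theorem algEquiv_tp_eq_negOnePow_smul (hι : ι (tp 1) = - tp 1) (n : ℤ) :
    ι (tp n) = n.negOnePow • tp n :=
  LaurentPolynomial.algHom_T_eq_negOnePow_smul ι.toAlgHom hι n

theorem map_yv_one (hDg : D (gp 1) = yv 1) (hΔg : ∀ n : ℤ, Δ (gp n) = gp n ⊗ₜ[ℂ] gp n)
    (hΔD : ∀ v : Rb, Δ (D v) =
      (TensorProduct.map D.toLinearMap LinearMap.id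
        + TensorProduct.map LinearMap.id D.toLinearMap
        : Rb ⊗[ℂ] Rb →ₗ[ℂ] Rb ⊗[ℂ] Rb) (Δ v)) :
    Δ (yv 1) = yv 1 ⊗ₜ gp 1 + gp 1 ⊗ₜ yv 1 := by
  rw [← hDg, map_derivation_apply_of_grouplike D hΔD (hΔg 1)]

theorem bicharacter_yv_one_gp (hDg : D (gp 1) = yv 1)
    (hd : ∀ n : ℤ, d (tp n) = (n : ℂ) • tp (n - 1))
    (hB1 : ∀ n m : ℤ, r (gp n) (gp m) = tp (n * m * (N : ℤ)))
    (hB3 : ∀ v w : Rb, r (D v) w = d (r v w)) (n : ℤ) :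
    r (yv 1) (gp n) = ((n * N : ℤ) : ℂ) • tp (n * N - 1) := by
  rw [← hDg, hB3, hB1, hd, one_mul]

theorem bicharacter_gp_yv_one (hNeven : Even N) (hDg : D (gp 1) = yv 1)
    (hd : ∀ n : ℤ, d (tp n) = (n : ℂ) • tp (n - 1)) (hι : ι (tp 1) = - tp 1)
    (hB1 : ∀ n m : ℤ, r (gp n) (gp m) = tp (n * m * (N : ℤ)))
    (hB2 : ∀ v w : Rb, r w v = ι (r v w)) (hB3 : ∀ v w : Rb, r (D v) w = d (r v w)) (n : ℤ) :
    r (gp n) (yv 1) = ((-(n * N) : ℤ) : ℂ) • tp (n * N - 1) := by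
  have hodd : Odd (n * N - 1) :=
    ((show Even (N : ℤ) by exact_mod_cast hNeven).mul_left n).sub_odd odd_one
  rw [hB2, bicharacter_yv_one_gp hDg hd hB1 hB3, map_smul, algEquiv_tp_eq_negOnePow_smul hι,
    Int.negOnePow_odd _ hodd, Units.neg_smul, one_smul, smul_neg, ← neg_smul, Int.cast_neg]

theorem bicharacter_yv_one_yv_one (hNeven : Even N) (hDg : D (gp 1) = yv 1)
    (hd : ∀ n : ℤ, d (tp n) = (n : ℂ) • tp (n - 1)) (hι : ι (tp 1) = - tp 1)
    (hB1 : ∀ n m : ℤ, r (gp n) (gp m) = tp (n * m * (N : ℤ)))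
    (hB2 : ∀ v w : Rb, r w v = ι (r v w)) (hB3 : ∀ v w : Rb, r (D v) w = d (r v w)) :
    r (yv 1) (yv 1) = (-(N * (N - 1)) : ℂ) • tp (N - 2) := by
  rw [← hDg, hB3, hDg, bicharacter_gp_yv_one hNeven hDg hd hι hB1 hB2 hB3, d.map_smul, hd,
    smul_smul]
  push_cast
  ring_nf

theorem bicharacter_gp_neg_one_mul_yv_one_yv_one (hNeven : Even N) (hDg : D (gp 1) = yv 1)
    (hΔy : Δ (yv 1) = yv 1 ⊗ₜ gp 1 + gp 1 ⊗ₜ yv 1)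
    (hd : ∀ n : ℤ, d (tp n) = (n : ℂ) • tp (n - 1)) (hι : ι (tp 1) = - tp 1)
    (hB1 : ∀ n m : ℤ, r (gp n) (gp m) = tp (n * m * (N : ℤ)))
    (hB2 : ∀ v w : Rb, r w v = ι (r v w)) (hB3 : ∀ v w : Rb, r (D v) w = d (r v w))
    (hB4 : ∀ v₁ v₂ w : Rb, r (v₁ * v₂) w =
      TensorProduct.lift ((LinearMap.mul ℂ Lt).compl₁₂ (r v₁) (r v₂)) (Δ w)) :
    r (gp (-1) * yv 1) (yv 1) = (N : ℂ) • tp (-2) := by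
  rw [hB4, hΔy, map_add, lift_mul_compl₁₂_tmul, lift_mul_compl₁₂_tmul,
    bicharacter_gp_yv_one hNeven hDg hd hι hB1 hB2 hB3, bicharacter_yv_one_gp hDg hd hB1 hB3,
    bicharacter_yv_one_yv_one hNeven hDg hd hι hB1 hB2 hB3, hB1,
    ← one_smul ℂ (tp (-1 * 1 * N)), smul_tp_mul_smul_tp, smul_tp_mul_smul_tp,
    show -1 * (N : ℤ) - 1 + (1 * N - 1) = -2 by ring,
    show -1 * 1 * (N : ℤ) + (N - 2) = -2 by ring, ← add_smul]
  congr 1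
  push_cast
  ring

end Borcherds

theorem bicharacter_y1_sq_values_general
    (N : ℕ) (hNeven : Even N)
    (D : Derivation ℂ Rb Rb) (hDg : D (gp 1) = yv 1)
    (Δ : Rb →ₐ[ℂ] Rb ⊗[ℂ] Rb)
    (hΔg : ∀ n : ℤ, Δ (gp n) = gp n ⊗ₜ[ℂ] gp n)
    (hΔD : ∀ v : Rb, Δ (D v) =
      (TensorProduct.map D.toLinearMap LinearMap.id
        + TensorProduct.map LinearMap.id D.toLinearMap
        : Rb ⊗[ℂ] Rb →ₗ[ℂ] Rb ⊗[ℂ] Rb) (Δ v))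
    (d : Derivation ℂ Lt Lt) (hd : ∀ n : ℤ, d (tp n) = (n : ℂ) • tp (n - 1))
    (ι : Lt ≃ₐ[ℂ] Lt) (hι : ι (tp 1) = - tp 1)
    (r : Rb →ₗ[ℂ] Rb →ₗ[ℂ] Lt)
    (hB1 : ∀ n m : ℤ, r (gp n) (gp m) = tp (n * m * (N : ℤ)))
    (hB2 : ∀ v w : Rb, r w v = ι (r v w))
    (hB3 : ∀ v w : Rb, r (D v) w = d (r v w))
    (hB4 : ∀ v₁ v₂ w : Rb, r (v₁ * v₂) w =
      TensorProduct.lift ((LinearMap.mul ℂ Lt).compl₁₂ (r v₁) (r v₂)) (Δ w)) :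
    r (yv 1 ^ 2) (gp (-2) * yv 1 ^ 2) = (2 * (N : ℂ) ^ 2) • tp (-4) ∧
    r (gp (-2) * yv 1 ^ 2) (gp (-2) * yv 1 ^ 2) = (2 * (N : ℂ) ^ 2) • tp (-4) := by
  have hΔy := map_yv_one hDg hΔg hΔD
  set x := gp (-1) * yv 1
  have hx : Δ x = x ⊗ₜ 1 + 1 ⊗ₜ x :=
    map_mul_of_grouplike_of_skew_primitive (hΔg (-1)) hΔy (by rw [← gp_add]; rfl)
  have h_y1_one : r (yv 1) 1 = 0 := by simpa [gp_zero] using bicharacter_yv_one_gp hDg hd hB1 hB3 0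
  have h_y1_x : r (yv 1) x = (N : ℂ) • tp (-2) := by
    rw [hB2, bicharacter_gp_neg_one_mul_yv_one_yv_one hNeven hDg hΔy hd hι hB1 hB2 hB3 hB4,
      map_smul, algEquiv_tp_eq_negOnePow_smul hι, Int.negOnePow_even _ (even_neg.mpr even_two),
      one_smul]
  have h_y1_sq : r (yv 1 ^ 2) (x ^ 2) = (2 * (N : ℂ) ^ 2) • tp (-4) := by
    rw [sq (yv 1), bicharacter_mul_sq_primitive hB4 hx, h_y1_x, h_y1_one, smul_tp_mul_smul_tp,
      mul_zero, zero_mul, add_zero, zero_add, two_mul, ← add_smul]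
    congr 1
    ring
  have hx2 : gp (-2) * yv 1 ^ 2 = x ^ 2 := gp_neg_one_mul_yv_one_sq.symm
  refine ⟨by rw [hx2]; exact h_y1_sq, ?_⟩
  calc r (gp (-2) * yv 1 ^ 2) (gp (-2) * yv 1 ^ 2)
      = r (gp (-2) * yv 1 ^ 2) (x ^ 2) := congrArg _ hx2
    _ = r (gp (-2)) 1 * r (yv 1 ^ 2) (x ^ 2) := by
        rw [bicharacter_mul_sq_primitive hB4 hx, sq (yv 1), bicharacter_mul_one hB4,
          bicharacter_mul_primitive hB4 hx, h_y1_one]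
        ring
    _ = (2 * (N : ℂ) ^ 2) • tp (-4) := by
        rw [← gp_zero, hB1, mul_zero, zero_mul, tp_zero, one_mul, h_y1_sq]

/-- `r(y₁², g⁻²y₁²) = 2N²·t⁻⁴`, and consequently `r(g⁻²y₁², g⁻²y₁²) = 2N²·t⁻⁴`. -/
theorem bicharacter_y1_sq_values
    (N : ℕ) (hNpos : 0 < N) (hNeven : Even N)
    (D : Derivation ℂ Rb Rb) (hDg : D (gp 1) = yv 1)
    (hDy : ∀ k : ℕ, 1 ≤ k → D (yv k) = ((k : ℂ) + 1) • yv (k + 1))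
    (Δ : Rb →ₐ[ℂ] Rb ⊗[ℂ] Rb)
    (hΔg : ∀ n : ℤ, Δ (gp n) = gp n ⊗ₜ[ℂ] gp n)
    (hΔD : ∀ v : Rb, Δ (D v) =
      (TensorProduct.map D.toLinearMap LinearMap.id
        + TensorProduct.map LinearMap.id D.toLinearMap
        : Rb ⊗[ℂ] Rb →ₗ[ℂ] Rb ⊗[ℂ] Rb) (Δ v))
    (d : Derivation ℂ Lt Lt) (hd : ∀ n : ℤ, d (tp n) = (n : ℂ) • tp (n - 1))
    (ι : Lt ≃ₐ[ℂ] Lt) (hι : ι (tp 1) = - tp 1)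
    (r : Rb →ₗ[ℂ] Rb →ₗ[ℂ] Lt)
    (hB1 : ∀ n m : ℤ, r (gp n) (gp m) = tp (n * m * (N : ℤ)))
    (hB2 : ∀ v w : Rb, r w v = ι (r v w))
    (hB3 : ∀ v w : Rb, r (D v) w = d (r v w))
    (hB4 : ∀ v₁ v₂ w : Rb, r (v₁ * v₂) w =
      TensorProduct.lift ((LinearMap.mul ℂ Lt).compl₁₂ (r v₁) (r v₂)) (Δ w)) :
    r (yv 1 ^ 2) (gp (-2) * yv 1 ^ 2) = (2 * (N : ℂ) ^ 2) • tp (-4) ∧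
    r (gp (-2) * yv 1 ^ 2) (gp (-2) * yv 1 ^ 2) = (2 * (N : ℂ) ^ 2) • tp (-4) :=
  bicharacter_y1_sq_values_general N hNeven D hDg Δ hΔg hΔD d hd ι hι r hB1 hB2 hB3 hB4
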